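/- arXiv:0904.4289 — 2 statements merged into one kernel-verified Lean document; each statement's English description precedes it below -/
import Mathlib

section
/- Let Q, P, Ω : ℝ → Matrix (Fin N) (Fin N) ℝ with Q, P differentiable, Ω(t) skew-symmetric, and Q'(t) = Q(t)Ω(t), P'(t) = P(t)Ω(t) for all t. Then the matrix P(t)Q(t)ᵀ is constant in t; in particular the spatial momentum P(t)Q(t)ᵀ − Q(t)P(t)ᵀ is a conserved quantity of the symmetric rigid body system. -/
open Matrix

/-!
Both `Q` and `P` are moved by right multiplication with the same skew-symmetric `Ω`, so
`(P Qᵀ)' = P Ω Qᵀ + P Ωᵀ Qᵀ = 0`. Transposing, `Q Pᵀ` is constant too, hence so is their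
difference.
-/

namespace Matrix

section Calculus

variable {𝕜 : Type*} {l m n : Type*}

theorem hasDerivAt_mul_apply [NontriviallyNormedField 𝕜] [Fintype m]
    {A : 𝕜 → Matrix l m 𝕜} {B : 𝕜 → Matrix m n 𝕜} {A' : Matrix l m 𝕜} {B' : Matrix m n 𝕜}
    {t : 𝕜} (hA : ∀ i j, HasDerivAt (fun s => A s i j) (A' i j) t)
    (hB : ∀ i j, HasDerivAt (fun s => B s i j) (B' i j) t) (i : l) (j : n) :
    HasDerivAt (fun s => (A s * B s) i j) ((A' * B t + A t * B') i j) t := by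
  simp only [mul_apply, add_apply, ← Finset.sum_add_distrib]
  exact HasDerivAt.fun_sum fun k _ => (hA i k).mul (hB k j)

theorem eq_of_hasDerivAt_apply_zero [RCLike 𝕜] {M : 𝕜 → Matrix m n 𝕜}
    (hM : ∀ t i j, HasDerivAt (fun s => M s i j) 0 t) (t₁ t₂ : 𝕜) : M t₁ = M t₂ := by
  ext i j
  exact is_const_of_deriv_eq_zero (fun t => (hM t i j).differentiableAt)
    (fun t => (hM t i j).deriv) t₁ t₂

end Calculus

theorem mul_mul_transpose_add_mul_transpose_mul_eq_zero {R : Type*} [CommRing R]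
    {l m n : Type*} [Fintype m] [Fintype n] (A : Matrix l m R) (B : Matrix n m R)
    {Ω : Matrix m m R} (hΩ : Ωᵀ = -Ω) :
    A * Ω * Bᵀ + A * (B * Ω)ᵀ = 0 := by
  rw [transpose_mul, hΩ, Matrix.mul_assoc, Matrix.neg_mul, Matrix.mul_neg, add_neg_cancel]

end Matrix

/-- **Conservation of spatial momentum for the symmetric rigid body system.**
If `Q' = QΩ` and `P' = PΩ` with `Ω(t)` skew-symmetric, then `P(t)Q(t)ᵀ` is
constant in `t`; in particular the spatial momentum
`P(t)Q(t)ᵀ - Q(t)P(t)ᵀ` is a conserved quantity. -/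
theorem rigid_body_spatial_momentum_conserved
    {N : ℕ} (Q P Ω : ℝ → Matrix (Fin N) (Fin N) ℝ)
    (hskew : ∀ t : ℝ, (Ω t)ᵀ = -Ω t)
    (hQ : ∀ (t : ℝ) (i j : Fin N),
      HasDerivAt (fun s => Q s i j) ((Q t * Ω t) i j) t)
    (hP : ∀ (t : ℝ) (i j : Fin N),
      HasDerivAt (fun s => P s i j) ((P t * Ω t) i j) t) :
    (∀ t₁ t₂ : ℝ, P t₁ * (Q t₁)ᵀ = P t₂ * (Q t₂)ᵀ) ∧
    (∀ t₁ t₂ : ℝ,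
      P t₁ * (Q t₁)ᵀ - Q t₁ * (P t₁)ᵀ = P t₂ * (Q t₂)ᵀ - Q t₂ * (P t₂)ᵀ) := by
  have hPQ : ∀ t₁ t₂ : ℝ, P t₁ * (Q t₁)ᵀ = P t₂ * (Q t₂)ᵀ := by
    refine eq_of_hasDerivAt_apply_zero fun t i j => ?_
    have h := hasDerivAt_mul_apply (B := fun s => (Q s)ᵀ) (B' := (Q t * Ω t)ᵀ) (hP t) (fun i j => hQ t j i) i j
    rwa [mul_mul_transpose_add_mul_transpose_mul_eq_zero _ _ (hskew t)] at h
  have hQP : ∀ t₁ t₂ : ℝ, Q t₁ * (P t₁)ᵀ = Q t₂ * (P t₂)ᵀ := fun t₁ t₂ => by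
    simpa only [transpose_mul, transpose_transpose] using congrArg transpose (hPQ t₁ t₂)
  exact ⟨hPQ, fun t₁ t₂ => by rw [hPQ t₁ t₂, hQP t₁ t₂]⟩
end

section
/- Let u : ℝ × (Fin 3 → ℝ) → (Fin 3 → ℝ) and π, l : ℝ × (Fin 3 → ℝ) → ℝ be twice continuously differentiable and satisfy, at every (t,x): ∂ₜπ + Σ_j u_j ∂_j π = 0, ∂ₜl + Σ_j u_j ∂_j l = 0, and div u = Σ_j ∂_j u_j = 0. Then the vector field w(t,x) := ∇π(t,x) × ∇l(t,x) (spatial gradients, standard cross product on ℝ³) satisfies the vorticity transport equation ∂ₜw = [w, u] := w·∇u − u·∇w, i.e. for each component i: ∂ₜw_i + Σ_j u_j ∂_j w_i = Σ_j w_j ∂_j u_i at every (t,x). -/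
/-- The Clebsch vorticity `w = ∇π × ∇l` (spatial gradients) of two scalar
functions of `(t, x) ∈ ℝ × ℝ³`. -/
noncomputable def clebschVort (π l : ℝ × (Fin 3 → ℝ) → ℝ)
    (p : ℝ × (Fin 3 → ℝ)) : Fin 3 → ℝ :=
  crossProduct (fun i => fderiv ℝ π p (0, Pi.single i 1))
    (fun i => fderiv ℝ l p (0, Pi.single i 1))

/-!
Write `D = ∂ₜ + u·∇` for the material derivative and `J = ∇u` for the spatial Jacobian.
Differentiating `Df = 0` in space and using the symmetry of second derivatives gives
`D(∇f) = -Jᵀ ∇f` for every advected scalar `f`. Since the cross product is bilinear,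
`Dw = D(∇π) × ∇l + ∇π × D(∇l) = -(Jᵀa × b + a × Jᵀb)` with `a = ∇π`, `b = ∇l`, and the identity
`Aa × b + a × Ab = (tr A)(a × b) - Aᵀ(a × b)` turns this into `Jw - (div u) w = Jw`.
-/

open Filter Topology Matrix

theorem cross_mulVec_add_cross_mulVec {R : Type*} [CommRing R] (A : Matrix (Fin 3) (Fin 3) R)
    (a b : Fin 3 → R) :
    (A *ᵥ a) ⨯₃ b + a ⨯₃ (A *ᵥ b) = A.trace • (a ⨯₃ b) - Aᵀ *ᵥ (a ⨯₃ b) := by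
  ext i
  fin_cases i <;>
    simp [cross_apply, mulVec, dotProduct, trace, Fin.sum_univ_three] <;> ring

theorem ContinuousLinearMap.map_prod_eq_smul_add_sum {n : ℕ} {G : Type*} [AddCommGroup G]
    [Module ℝ G] [TopologicalSpace G] (L : ℝ × (Fin n → ℝ) →L[ℝ] G) (s : ℝ) (v : Fin n → ℝ) :
    L (s, v) = s • L (1, 0) + ∑ j, v j • L (0, Pi.single j 1) := by
  have hsv : ((s, v) : ℝ × (Fin n → ℝ)) = s • (1, 0) + ∑ j, v j • (0, Pi.single j 1) := by
    ext k
    · simp [Prod.fst_sum]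
    · simp [Prod.snd_sum, Pi.single_apply]
  rw [hsv, map_add, map_smul, map_sum]
  simp only [map_smul]

section MaterialDeriv

variable {F G : Type*} [NormedAddCommGroup F] [NormedSpace ℝ F]
  [NormedAddCommGroup G] [NormedSpace ℝ G]

noncomputable def materialDeriv (u : ℝ × F → F) (f : ℝ × F → G) (p : ℝ × F) : G :=
  fderiv ℝ f p (1, u p)

theorem materialDeriv_apply {ι : Type*} [Fintype ι] {u : ℝ × F → F} {a : ℝ × F → ι → ℝ}
    {p : ℝ × F} (ha : DifferentiableAt ℝ a p) (i : ι) :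
    materialDeriv u (fun q => a q i) p = materialDeriv u a p i := by
  simp [materialDeriv, fderiv_apply ha]

theorem DifferentiableAt.cross {E : Type*} [NormedAddCommGroup E] [NormedSpace ℝ E]
    {a b : E → Fin 3 → ℝ} {x : E} (ha : DifferentiableAt ℝ a x) (hb : DifferentiableAt ℝ b x) :
    DifferentiableAt ℝ (fun y => a y ⨯₃ b y) x :=
  ((crossProduct (R := ℝ)).toContinuousBilinearMap.hasFDerivAt_of_bilinear ha.hasFDerivAt
    hb.hasFDerivAt).differentiableAt

theorem materialDeriv_cross {u : ℝ × F → F} {a b : ℝ × F → Fin 3 → ℝ} {p : ℝ × F}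
    (ha : DifferentiableAt ℝ a p) (hb : DifferentiableAt ℝ b p) :
    materialDeriv u (fun q => a q ⨯₃ b q) p
      = materialDeriv u a p ⨯₃ b p + a p ⨯₃ materialDeriv u b p := by
  have hderiv := crossProduct.toContinuousBilinearMap.fderiv_of_bilinear ha hb
  simp only [LinearMap.toContinuousBilinearMap_apply] at hderiv
  simp [materialDeriv, hderiv, add_comm]

theorem materialDeriv_fderiv_apply {u : ℝ × F → F} {f : ℝ × F → ℝ} {p : ℝ × F}
    (hu : DifferentiableAt ℝ u p) (hf : ContDiffAt ℝ 2 f p)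
    (hadv : ∀ᶠ q in 𝓝 p, materialDeriv u f q = 0) (v : ℝ × F) :
    materialDeriv u (fun q => fderiv ℝ f q v) p = -fderiv ℝ f p (0, fderiv ℝ u p v) := by
  have hf' : HasFDerivAt (fderiv ℝ f) (fderiv ℝ (fderiv ℝ f) p) p :=
    ((hf.fderiv_right le_rfl).differentiableAt one_ne_zero).hasFDerivAt
  have hvel : HasFDerivAt (fun q => ((1 : ℝ), u q)) ((0 : ℝ × F →L[ℝ] ℝ).prod (fderiv ℝ u p)) p :=
    (hasFDerivAt_const 1 p).prodMk hu.hasFDerivAt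
  have hadv' : fderiv ℝ f p (0, fderiv ℝ u p v) + fderiv ℝ (fderiv ℝ f) p v (1, u p) = 0 := by
    simpa using congrArg (· v) <|
      (hf'.clm_apply hvel).unique ((hasFDerivAt_const 0 p).congr_of_eventuallyEq hadv)
  have hsecond : materialDeriv u (fun q => fderiv ℝ f q v) p = fderiv ℝ (fderiv ℝ f) p (1, u p) v :=
    congrArg (· (1, u p)) (hf'.clm_apply (hasFDerivAt_const v p)).fderiv |>.trans (by simp)
  rw [hsecond, hf.isSymmSndFDerivAt (by simp) (1, u p) v]
  linear_combination hadv'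

end MaterialDeriv

section Coordinates

variable {n : ℕ}

noncomputable def spatialGrad (f : ℝ × (Fin n → ℝ) → ℝ) (p : ℝ × (Fin n → ℝ)) : Fin n → ℝ :=
  fun k => fderiv ℝ f p (0, Pi.single k 1)

noncomputable def spatialJacobian (u : ℝ × (Fin n → ℝ) → Fin n → ℝ) (p : ℝ × (Fin n → ℝ)) :
    Matrix (Fin n) (Fin n) ℝ :=
  Matrix.of fun j k => fderiv ℝ (fun q => u q j) p (0, Pi.single k 1)

theorem materialDeriv_eq_sum {G : Type*} [NormedAddCommGroup G] [NormedSpace ℝ G]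
    (u : ℝ × (Fin n → ℝ) → Fin n → ℝ) (f : ℝ × (Fin n → ℝ) → G) (p : ℝ × (Fin n → ℝ)) :
    materialDeriv u f p = fderiv ℝ f p (1, 0) + ∑ j, u p j • fderiv ℝ f p (0, Pi.single j 1) := by
  rw [materialDeriv, ContinuousLinearMap.map_prod_eq_smul_add_sum, one_smul]

theorem differentiableAt_spatialGrad {f : ℝ × (Fin n → ℝ) → ℝ} {p : ℝ × (Fin n → ℝ)}
    (hf : ContDiffAt ℝ 2 f p) : DifferentiableAt ℝ (spatialGrad f) p :=
  differentiableAt_pi.2 fun _ =>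
    ((hf.fderiv_right le_rfl).differentiableAt one_ne_zero).clm_apply (differentiableAt_const _)

theorem materialDeriv_spatialGrad {u : ℝ × (Fin n → ℝ) → Fin n → ℝ} {f : ℝ × (Fin n → ℝ) → ℝ}
    {p : ℝ × (Fin n → ℝ)} (hu : DifferentiableAt ℝ u p) (hf : ContDiffAt ℝ 2 f p)
    (hadv : ∀ᶠ q in 𝓝 p, materialDeriv u f q = 0) :
    materialDeriv u (spatialGrad f) p = -((spatialJacobian u p)ᵀ *ᵥ spatialGrad f p) := by
  ext k
  rw [← materialDeriv_apply (differentiableAt_spatialGrad hf)]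
  simp only [spatialGrad]
  rw [materialDeriv_fderiv_apply hu hf hadv, ContinuousLinearMap.map_prod_eq_smul_add_sum]
  simp [mulVec, dotProduct, spatialJacobian, spatialGrad, fderiv_apply hu, mul_comm]

end Coordinates

/-- **Vorticity transport for Euler flow in Clebsch variables.**
If the scalar Clebsch functions `π, l` are advected by a divergence-free
`C²` velocity field `u` (`Dπ/Dt = 0 = Dl/Dt`, `div u = 0`), then
`w := ∇π × ∇l` satisfies the vorticity equation
`∂ₜw = [w, u] = w·∇u - u·∇w`, i.e. componentwise
`∂ₜwᵢ + Σⱼ uⱼ ∂ⱼwᵢ = Σⱼ wⱼ ∂ⱼuᵢ`. -/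
theorem clebsch_vorticity_transport
    (u : ℝ × (Fin 3 → ℝ) → (Fin 3 → ℝ))
    (π l : ℝ × (Fin 3 → ℝ) → ℝ)
    (hu : ContDiff ℝ 2 u) (hπ : ContDiff ℝ 2 π) (hl : ContDiff ℝ 2 l)
    (hadvπ : ∀ p : ℝ × (Fin 3 → ℝ),
      fderiv ℝ π p (1, 0)
        + ∑ j, u p j * fderiv ℝ π p (0, Pi.single j 1) = 0)
    (hadvl : ∀ p : ℝ × (Fin 3 → ℝ),
      fderiv ℝ l p (1, 0)
        + ∑ j, u p j * fderiv ℝ l p (0, Pi.single j 1) = 0)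
    (hdiv : ∀ p : ℝ × (Fin 3 → ℝ),
      ∑ j, fderiv ℝ (fun q => u q j) p (0, Pi.single j 1) = 0) :
    ∀ (p : ℝ × (Fin 3 → ℝ)) (i : Fin 3),
      fderiv ℝ (fun q => clebschVort π l q i) p (1, 0)
        + ∑ j, u p j * fderiv ℝ (fun q => clebschVort π l q i) p (0, Pi.single j 1)
      = ∑ j, clebschVort π l p j * fderiv ℝ (fun q => u q i) p (0, Pi.single j 1) := by
  intro p i
  have hu' := hu.differentiable two_ne_zero p
  have hgradπ := differentiableAt_spatialGrad hπ.contDiffAt (p := p)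
  have hgradl := differentiableAt_spatialGrad hl.contDiffAt (p := p)
  have hvort : clebschVort π l = fun q => spatialGrad π q ⨯₃ spatialGrad l q := rfl
  have htrace : (spatialJacobian u p).trace = 0 := hdiv p
  calc _ = materialDeriv u (fun q => clebschVort π l q i) p := (materialDeriv_eq_sum ..).symm
    _ = materialDeriv u (clebschVort π l) p i :=
        materialDeriv_apply (hvort ▸ hgradπ.cross hgradl) i
    _ = (spatialJacobian u p *ᵥ clebschVort π l p) i := by
        rw [hvort, materialDeriv_cross hgradπ hgradl,
          materialDeriv_spatialGrad hu' hπ.contDiffAt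
            (.of_forall fun q => (materialDeriv_eq_sum ..).trans (hadvπ q)),
          materialDeriv_spatialGrad hu' hl.contDiffAt
            (.of_forall fun q => (materialDeriv_eq_sum ..).trans (hadvl q)),
          map_neg, LinearMap.neg_apply, map_neg, ← neg_add, cross_mulVec_add_cross_mulVec,
          trace_transpose, htrace, transpose_transpose]
        simp
    _ = _ := by simp [mulVec, dotProduct, spatialJacobian, mul_comm]
end
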